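/- Variance of the magnetization: for the magnetization chain (S_t) of the Curie-Weiss Glauber dynamics, there is a constant C > 0 (depending only on β) such that for all n, all t ≥ 0, and all starting states: if β < 1 then Var(S_t) ≤ C/n, and if β = 1 then Var(S_t) ≤ C·t/n². -/

import Mathlib

/-!
Given `S_t = s`, the next state has conditional mean `nextMean β n s = s + (2/n)(rateUp - rateDown)`
and conditional variance `(2/n)² (rateUp + rateDown - (rateUp - rateDown)²) ≤ 4/n²`. Since `tanh`
is increasing and 1-Lipschitz, `|nextMean'| ≤ L := 1 - (1 - β)/n` on `[-1, 1]`, so `nextMean`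
shrinks the variance by a factor `L²`. The law of total variance thus gives
`Var S_{t+1} ≤ L² Var S_t + 4/n²`: for `β < 1` the variance stays below the fixed point
`4/((1 - β) n)`, and for `β = 1`, where `L = 1`, it grows by at most `4/n²` per step.
-/

open Filter Real

namespace CW

noncomputable section

/-- `p₊(s) = (1 + tanh(βs))/2`. -/
def pPlus (β s : ℝ) : ℝ := (1 + Real.tanh (β * s)) / 2

/-- `p₋(s) = (1 - tanh(βs))/2`. -/
def pMinus (β s : ℝ) : ℝ := (1 - Real.tanh (β * s)) / 2

/-- The value of the magnetization corresponding to `k` plus spins among `n`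
sites: the state space `Ω_S = {-1, -1 + 2/n, …, 1 - 2/n, 1}` is indexed by
`k ∈ {0, 1, …, n}`, with `magVal n k = (2k - n)/n`. -/
def magVal (n : ℕ) (k : Fin (n + 1)) : ℝ := (2 * (k : ℕ) - n) / n

/-- Transition kernel of the magnetization chain of the Curie-Weiss Glauber
dynamics: from `s` move to `s - 2/n` with probability `((1+s)/2) p₋(s - 1/n)`,
to `s + 2/n` with probability `((1-s)/2) p₊(s + 1/n)`, and stay put
otherwise. -/
def magKernel (β : ℝ) (n : ℕ) (k l : Fin (n + 1)) : ℝ :=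
  if (l : ℕ) + 1 = (k : ℕ) then
    ((1 + magVal n k) / 2) * pMinus β (magVal n k - 1 / n)
  else if (k : ℕ) + 1 = (l : ℕ) then
    ((1 - magVal n k) / 2) * pPlus β (magVal n k + 1 / n)
  else if l = k then
    1 - ((1 + magVal n k) / 2) * pMinus β (magVal n k - 1 / n)
      - ((1 - magVal n k) / 2) * pPlus β (magVal n k + 1 / n)
  else 0

/-- Law of the magnetization chain at time `t` started from `k`. -/
def magLaw (β : ℝ) (n : ℕ) : ℕ → Fin (n + 1) → Fin (n + 1) → ℝ
  | 0, k, l => if l = k then 1 else 0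
  | t + 1, k, l => ∑ m, magLaw β n t k m * magKernel β n m l

/-- Mean of `S_t` for the chain started from `k`. -/
def magMean (β : ℝ) (n t : ℕ) (k : Fin (n + 1)) : ℝ :=
  ∑ l, magLaw β n t k l * magVal n l

/-- Variance of `S_t` for the chain started from `k`. -/
def magVar (β : ℝ) (n t : ℕ) (k : Fin (n + 1)) : ℝ :=
  (∑ l, magLaw β n t k l * (magVal n l) ^ 2) - (magMean β n t k) ^ 2

end

end CW

namespace Real

theorem hasDerivAt_tanh (x : ℝ) : HasDerivAt tanh (1 - tanh x ^ 2) x := by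
  have h := (hasDerivAt_sinh x).fun_div (hasDerivAt_cosh x) (cosh_pos x).ne'
  rw [show tanh = fun x => sinh x / cosh x from funext tanh_eq_sinh_div_cosh]
  refine h.congr_deriv ?_
  field_simp

theorem strictMono_tanh : StrictMono tanh :=
  strictMono_of_hasDerivAt_pos hasDerivAt_tanh fun x => sub_pos.2 (tanh_sq_lt_one x)

theorem tanh_sub_tanh_le {x y : ℝ} (h : x ≤ y) : tanh y - tanh x ≤ y - x := by
  simpa using image_sub_le_mul_sub_of_deriv_le (C := 1)
    (fun z => (hasDerivAt_tanh z).differentiableAt)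
    (fun z => by rw [(hasDerivAt_tanh z).deriv]; linarith [sq_nonneg (tanh z)]) h

end Real

section WeightedVariance

variable {ι : Type*} [Fintype ι]

def weightedVar (μ f : ι → ℝ) : ℝ := ∑ i, μ i * f i ^ 2 - (∑ i, μ i * f i) ^ 2

theorem sum_mul_sub_sq_eq_weightedVar_add {μ : ι → ℝ} (hμ : ∑ i, μ i = 1) (f : ι → ℝ) (c : ℝ) :
    ∑ i, μ i * (f i - c) ^ 2 = weightedVar μ f + (∑ i, μ i * f i - c) ^ 2 := by
  have expand : ∑ i, μ i * (f i - c) ^ 2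
      = ∑ i, μ i * f i ^ 2 - 2 * c * ∑ i, μ i * f i + c ^ 2 * ∑ i, μ i := by
    simp only [Finset.mul_sum, ← Finset.sum_sub_distrib, ← Finset.sum_add_distrib]
    exact Finset.sum_congr rfl fun i _ => by ring
  rw [expand, hμ, weightedVar]
  ring

theorem weightedVar_comp_le {μ f : ι → ℝ} (hμ₀ : ∀ i, 0 ≤ μ i) (hμ : ∑ i, μ i = 1)
    {g : ℝ → ℝ} {L : ℝ}
    (hg : ∀ i, |g (f i) - g (∑ j, μ j * f j)| ≤ L * |f i - ∑ j, μ j * f j|) :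
    weightedVar μ (g ∘ f) ≤ L ^ 2 * weightedVar μ f := by
  set m := ∑ j, μ j * f j
  calc weightedVar μ (g ∘ f) ≤ ∑ i, μ i * (g (f i) - g m) ^ 2 := by
        have h := sum_mul_sub_sq_eq_weightedVar_add hμ (g ∘ f) (g m)
        simp only [Function.comp_apply] at h
        linarith [sq_nonneg (∑ i, μ i * g (f i) - g m)]
    _ ≤ ∑ i, μ i * (L ^ 2 * (f i - m) ^ 2) := by
        refine Finset.sum_le_sum fun i _ => mul_le_mul_of_nonneg_left ?_ (hμ₀ i)
        rw [← sq_abs, ← sq_abs (f i - m), ← mul_pow]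
        exact pow_le_pow_left₀ (abs_nonneg _) (hg i) 2
    _ = L ^ 2 * weightedVar μ f := by
        rw [← Finset.sum_congr rfl fun i _ => mul_left_comm (L ^ 2) (μ i) _, ← Finset.mul_sum,
          sum_mul_sub_sq_eq_weightedVar_add hμ, sub_self, zero_pow two_ne_zero, add_zero]

end WeightedVariance

theorem le_of_succ_le_mul_add {v : ℕ → ℝ} {q c M : ℝ} (hq : 0 ≤ q) (h₀ : v 0 ≤ M)
    (hM : q * M + c ≤ M) (hstep : ∀ t, v (t + 1) ≤ q * v t + c) (t : ℕ) : v t ≤ M := by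
  induction t with
  | zero => exact h₀
  | succ t ih => nlinarith [hstep t]

theorem le_add_mul_of_succ_le_add {v : ℕ → ℝ} {c : ℝ} (hstep : ∀ t, v (t + 1) ≤ v t + c)
    (t : ℕ) : v t ≤ v 0 + c * t := by
  induction t with
  | zero => simp
  | succ t ih => push_cast; linarith [hstep t]

namespace CW

noncomputable section

variable {β : ℝ} {n : ℕ}

theorem abs_magVal_le_one (k : Fin (n + 1)) : |magVal n k| ≤ 1 := by
  have hk : (k : ℝ) ≤ n := by exact_mod_cast Nat.lt_succ_iff.1 k.isLt
  rw [magVal, abs_div, Nat.abs_cast]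
  exact div_le_one_of_le₀ (abs_le.2 ⟨by linarith [(k : ℕ).cast_nonneg (α := ℝ)], by linarith⟩)
    n.cast_nonneg

theorem magVal_zero (hn : 0 < n) : magVal n 0 = -1 := by
  have : (n : ℝ) ≠ 0 := by positivity
  simp [magVal, neg_div, div_self this]

theorem magVal_last (hn : 0 < n) : magVal n (Fin.last n) = 1 := by
  have : (n : ℝ) ≠ 0 := by positivity
  simp only [magVal, Fin.val_last]
  field_simp
  ring

theorem magVal_succ (hn : 0 < n) (j : Fin n) :
    magVal n j.succ = magVal n j.castSucc + 2 / n := by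
  have : (n : ℝ) ≠ 0 := by positivity
  simp only [magVal, Fin.val_succ, Fin.val_castSucc]
  field_simp
  push_cast
  ring

theorem pPlus_mem_Icc (β s : ℝ) : pPlus β s ∈ Set.Icc 0 1 := by
  have := abs_le.1 (abs_tanh_lt_one (β * s)).le
  constructor <;> unfold pPlus <;> linarith

theorem pMinus_mem_Icc (β s : ℝ) : pMinus β s ∈ Set.Icc 0 1 := by
  have := abs_le.1 (abs_tanh_lt_one (β * s)).le
  constructor <;> unfold pMinus <;> linarith

def rateDown (β : ℝ) (n : ℕ) (s : ℝ) : ℝ := (1 + s) / 2 * pMinus β (s - 1 / n)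

def rateUp (β : ℝ) (n : ℕ) (s : ℝ) : ℝ := (1 - s) / 2 * pPlus β (s + 1 / n)

theorem rateDown_neg_one : rateDown β n (-1) = 0 := by simp [rateDown]

theorem rateUp_one : rateUp β n 1 = 0 := by simp [rateUp]

theorem rate_bounds {s : ℝ} (hs : |s| ≤ 1) :
    0 ≤ rateDown β n s ∧ 0 ≤ rateUp β n s ∧ rateDown β n s + rateUp β n s ≤ 1 := by
  obtain ⟨hs₁, hs₂⟩ := abs_le.1 hs
  obtain ⟨hm₀, hm₁⟩ := pMinus_mem_Icc β (s - 1 / n)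
  obtain ⟨hp₀, hp₁⟩ := pPlus_mem_Icc β (s + 1 / n)
  refine ⟨mul_nonneg (by linarith) hm₀, mul_nonneg (by linarith) hp₀, ?_⟩
  unfold rateDown rateUp
  nlinarith

theorem magKernel_eq_ite (k l : Fin (n + 1)) :
    magKernel β n k l =
      if (l : ℕ) + 1 = k then rateDown β n (magVal n k)
      else if (k : ℕ) + 1 = l then rateUp β n (magVal n k)
      else if l = k then 1 - rateDown β n (magVal n k) - rateUp β n (magVal n k)
      else 0 := rfl

theorem magKernel_nonneg (k l : Fin (n + 1)) : 0 ≤ magKernel β n k l := by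
  obtain ⟨hd, hu, hdu⟩ := rate_bounds (β := β) (n := n) (abs_magVal_le_one k)
  rw [magKernel_eq_ite]
  split_ifs <;> linarith

theorem sum_magKernel_mul (hn : 0 < n) (k : Fin (n + 1)) (φ : ℝ → ℝ) :
    ∑ l, magKernel β n k l * φ (magVal n l) =
      rateDown β n (magVal n k) * φ (magVal n k - 2 / n)
      + rateUp β n (magVal n k) * φ (magVal n k + 2 / n)
      + (1 - rateDown β n (magVal n k) - rateUp β n (magVal n k)) * φ (magVal n k) := by
  set s := magVal n k
  have split : ∀ l : Fin (n + 1), magKernel β n k l * φ (magVal n l) =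
      (if (l : ℕ) + 1 = k then rateDown β n s * φ (magVal n l) else 0)
      + (if (k : ℕ) + 1 = l then rateUp β n s * φ (magVal n l) else 0)
      + (if k = l then (1 - rateDown β n s - rateUp β n s) * φ (magVal n l) else 0) := by
    intro l
    rw [magKernel_eq_ite]
    simp only [Fin.ext_iff]
    split_ifs <;> first | omega | ring
  have down : ∑ l : Fin (n + 1), (if (l : ℕ) + 1 = k then rateDown β n s * φ (magVal n l) else 0)
      = rateDown β n s * φ (s - 2 / n) := by
    induction k using Fin.cases with
    | zero => simp [s, magVal_zero hn, rateDown_neg_one]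
    | succ j =>
      have hval (l : Fin (n + 1)) : (l : ℕ) + 1 = j.succ ↔ j.castSucc = l := by
        simp [Fin.ext_iff, eq_comm]
      simp only [hval, Finset.sum_ite_eq, Finset.mem_univ, if_true, s, magVal_succ hn,
        add_sub_cancel_right]
  have up : ∑ l : Fin (n + 1), (if (k : ℕ) + 1 = l then rateUp β n s * φ (magVal n l) else 0)
      = rateUp β n s * φ (s + 2 / n) := by
    induction k using Fin.lastCases with
    | last => simp [s, magVal_last hn, rateUp_one]
    | cast j =>
      have hval (l : Fin (n + 1)) : (j.castSucc : ℕ) + 1 = l ↔ j.succ = l := by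
        simp [Fin.ext_iff]
      simp only [hval, Finset.sum_ite_eq, Finset.mem_univ, if_true, s, magVal_succ hn]
  rw [Finset.sum_congr rfl fun l _ => split l, Finset.sum_add_distrib, Finset.sum_add_distrib,
    down, up, Finset.sum_ite_eq, if_pos (Finset.mem_univ k)]

theorem sum_magKernel (hn : 0 < n) (k : Fin (n + 1)) : ∑ l, magKernel β n k l = 1 := by
  simpa using sum_magKernel_mul (β := β) hn k fun _ => 1

def nextMean (β : ℝ) (n : ℕ) (s : ℝ) : ℝ := s + 2 / n * (rateUp β n s - rateDown β n s)

theorem sum_magKernel_mul_magVal (hn : 0 < n) (k : Fin (n + 1)) :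
    ∑ l, magKernel β n k l * magVal n l = nextMean β n (magVal n k) := by
  rw [sum_magKernel_mul hn k fun x => x, nextMean]
  ring

theorem sum_magKernel_mul_magVal_sq_le (hn : 0 < n) (k : Fin (n + 1)) :
    ∑ l, magKernel β n k l * magVal n l ^ 2 ≤ nextMean β n (magVal n k) ^ 2 + 4 / (n : ℝ) ^ 2 := by
  rw [sum_magKernel_mul hn k (· ^ 2), nextMean]
  obtain ⟨hd, hu, hdu⟩ := rate_bounds (β := β) (n := n) (abs_magVal_le_one k)
  set d := rateDown β n (magVal n k)
  set u := rateUp β n (magVal n k)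
  have gap : (2 / (n : ℝ)) ^ 2 * (d + u - (u - d) ^ 2) ≤ 4 / (n : ℝ) ^ 2 := by
    rw [div_pow]
    nlinarith [sq_nonneg (u - d), div_nonneg zero_le_four (sq_nonneg (n : ℝ))]
  linarith

theorem sum_magLaw_succ_mul (t : ℕ) (k : Fin (n + 1)) (f : Fin (n + 1) → ℝ) :
    ∑ l, magLaw β n (t + 1) k l * f l = ∑ m, magLaw β n t k m * ∑ l, magKernel β n m l * f l := by
  simp only [magLaw, Finset.sum_mul, Finset.mul_sum, mul_assoc]
  exact Finset.sum_comm

theorem magLaw_nonneg (t : ℕ) (k l : Fin (n + 1)) : 0 ≤ magLaw β n t k l := by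
  induction t generalizing l with
  | zero => unfold magLaw; split_ifs <;> norm_num
  | succ t ih => exact Finset.sum_nonneg fun m _ => mul_nonneg (ih m) (magKernel_nonneg m l)

theorem sum_magLaw (hn : 0 < n) (t : ℕ) (k : Fin (n + 1)) : ∑ l, magLaw β n t k l = 1 := by
  induction t with
  | zero => simp [magLaw]
  | succ t ih => simpa [sum_magKernel hn, ih] using sum_magLaw_succ_mul (β := β) t k fun _ => 1

theorem abs_magMean_le_one (hn : 0 < n) (t : ℕ) (k : Fin (n + 1)) : |magMean β n t k| ≤ 1 := by
  calc |magMean β n t k| ≤ ∑ l, magLaw β n t k l * |magVal n l| := by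
        simpa only [magMean, abs_mul, abs_of_nonneg (magLaw_nonneg _ _ _)] using
          Finset.abs_sum_le_sum_abs (fun l => magLaw β n t k l * magVal n l) Finset.univ
    _ ≤ ∑ l, magLaw β n t k l :=
        Finset.sum_le_sum fun l _ => mul_le_of_le_one_right (magLaw_nonneg _ _ _)
          (abs_magVal_le_one l)
    _ = 1 := sum_magLaw hn t k

def nextMeanDeriv (β : ℝ) (n : ℕ) (s : ℝ) : ℝ :=
  1 - 1 / n + 1 / (2 * n) * (tanh (β * (s - 1 / n)) - tanh (β * (s + 1 / n))
    + β * ((1 - s) * (1 - tanh (β * (s + 1 / n)) ^ 2)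
      + (1 + s) * (1 - tanh (β * (s - 1 / n)) ^ 2)))

theorem nextMean_eq (s : ℝ) :
    nextMean β n s = (1 - 1 / n) * s
      + 1 / (2 * n) * ((1 - s) * tanh (β * (s + 1 / n)) + (1 + s) * tanh (β * (s - 1 / n))) := by
  simp only [nextMean, rateUp, rateDown, pPlus, pMinus]
  ring

theorem hasDerivAt_nextMean (s : ℝ) :
    HasDerivAt (nextMean β n) (nextMeanDeriv β n s) s := by
  have hplus : HasDerivAt (fun s => tanh (β * (s + 1 / n)))
      ((1 - tanh (β * (s + 1 / n)) ^ 2) * (β * 1)) s :=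
    (hasDerivAt_tanh _).comp s (((hasDerivAt_id s).add_const _).const_mul β)
  have hminus : HasDerivAt (fun s => tanh (β * (s - 1 / n)))
      ((1 - tanh (β * (s - 1 / n)) ^ 2) * (β * 1)) s :=
    (hasDerivAt_tanh _).comp s (((hasDerivAt_id s).sub_const _).const_mul β)
  have h := ((hasDerivAt_id s).const_mul (1 - 1 / (n : ℝ))).add
    (((((hasDerivAt_id s).const_sub 1).mul hplus).add
      (((hasDerivAt_id s).const_add 1).mul hminus)).const_mul (1 / (2 * (n : ℝ))))
  refine (h.congr_of_eventuallyEq (Eventually.of_forall fun x => ?_)).congr_deriv ?_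
  · simp only [nextMean_eq, Pi.add_apply, Pi.mul_apply, id]
  · simp only [nextMeanDeriv, id]
    ring

theorem abs_nextMeanDeriv_le (hn : 0 < n) (hβ₀ : 0 ≤ β) {s : ℝ} (hs : |s| ≤ 1) :
    |nextMeanDeriv β n s| ≤ 1 - (1 - β) / n := by
  obtain ⟨hs₁, hs₂⟩ := abs_le.1 hs
  set u : ℝ := 1 / n with hu
  have hu₀ : 0 < u := by positivity
  have hu₁ : u ≤ 1 := div_le_one_of_le₀ (by exact_mod_cast hn) n.cast_nonneg
  set a := tanh (β * (s + u))
  set b := tanh (β * (s - u))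
  have hba : b ≤ a := strictMono_tanh.monotone (by nlinarith)
  have hab : a - b ≤ 2 * β * u := by
    have := tanh_sub_tanh_le (show β * (s - u) ≤ β * (s + u) by nlinarith)
    linarith
  have ha := tanh_sq_lt_one (β * (s + u))
  have hb := tanh_sq_lt_one (β * (s - u))
  set E := β * ((1 - s) * (1 - a ^ 2) + (1 + s) * (1 - b ^ 2))
  have hE₀ : 0 ≤ E := by
    have : 0 ≤ (1 - s) * (1 - a ^ 2) + (1 + s) * (1 - b ^ 2) := by nlinarith
    positivity
  have hE₂ : E ≤ 2 * β := by
    have : (1 - s) * (1 - a ^ 2) + (1 + s) * (1 - b ^ 2) ≤ 2 := by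
      nlinarith [sq_nonneg a, sq_nonneg b]
    nlinarith
  have hD : nextMeanDeriv β n s = 1 - u + u / 2 * (b - a + E) := by
    rw [nextMeanDeriv, ← hu, show 1 / (2 * (n : ℝ)) = u / 2 by rw [hu]; ring]
  rw [hD, show (1 - β) / (n : ℝ) = (1 - β) * u by rw [hu]; ring, abs_le]
  constructor <;> nlinarith [mul_nonneg (sub_nonneg.2 hu₁) (by positivity : 0 ≤ 2 + β * u)]

theorem abs_nextMean_sub_le (hn : 0 < n) (hβ₀ : 0 ≤ β) {x y : ℝ}
    (hx : |x| ≤ 1) (hy : |y| ≤ 1) :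
    |nextMean β n x - nextMean β n y| ≤ (1 - (1 - β) / n) * |x - y| := by
  simpa only [Real.norm_eq_abs] using
    (convex_Icc (-1 : ℝ) 1).norm_image_sub_le_of_norm_hasDerivWithin_le
      (fun z _ => (hasDerivAt_nextMean z).hasDerivWithinAt)
      (fun z hz => abs_nextMeanDeriv_le hn hβ₀ (abs_le.2 hz)) (abs_le.1 hy) (abs_le.1 hx)

theorem magVar_succ_le (hn : 0 < n) (hβ₀ : 0 ≤ β) (t : ℕ) (k : Fin (n + 1)) :
    magVar β n (t + 1) k ≤ (1 - (1 - β) / n) ^ 2 * magVar β n t k + 4 / (n : ℝ) ^ 2 := by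
  set μ := magLaw β n t k
  have hμ : ∑ m, μ m = 1 := sum_magLaw hn t k
  have mean : magMean β n (t + 1) k = ∑ m, μ m * nextMean β n (magVal n m) := by
    rw [magMean, sum_magLaw_succ_mul]
    exact Finset.sum_congr rfl fun m _ => by rw [sum_magKernel_mul_magVal hn]
  have second : ∑ l, magLaw β n (t + 1) k l * magVal n l ^ 2
      ≤ ∑ m, μ m * nextMean β n (magVal n m) ^ 2 + 4 / (n : ℝ) ^ 2 := by
    rw [sum_magLaw_succ_mul]
    calc _ ≤ ∑ m, μ m * (nextMean β n (magVal n m) ^ 2 + 4 / (n : ℝ) ^ 2) :=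
          Finset.sum_le_sum fun m _ => mul_le_mul_of_nonneg_left
            (sum_magKernel_mul_magVal_sq_le hn m) (magLaw_nonneg t k m)
      _ = _ := by simp only [mul_add, Finset.sum_add_distrib, ← Finset.sum_mul, hμ, one_mul]
  have contraction : weightedVar μ (nextMean β n ∘ magVal n)
      ≤ (1 - (1 - β) / n) ^ 2 * magVar β n t k :=
    weightedVar_comp_le (magLaw_nonneg t k) hμ fun l =>
      abs_nextMean_sub_le hn hβ₀ (abs_magVal_le_one l) (abs_magMean_le_one hn t k)
  rw [magVar, mean]
  simp only [weightedVar, Function.comp_apply] at contraction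
  linarith

theorem magVar_zero_time (k : Fin (n + 1)) : magVar β n 0 k = 0 := by
  simp [magVar, magMean, magLaw]

theorem magVar_zero_sites (t : ℕ) (k : Fin 1) : magVar β 0 t k = 0 := by
  simp [magVar, magMean, magVal]

theorem magVar_le_of_lt_one (hn : 0 < n) (hβ₀ : 0 ≤ β) (hβ₁ : β < 1) (t : ℕ) (k : Fin (n + 1)) :
    magVar β n t k ≤ 4 / ((1 - β) * n) := by
  set L : ℝ := 1 - (1 - β) / n with hL
  have hnR : (1 : ℝ) ≤ n := by exact_mod_cast hn
  have hL₀ : 0 ≤ L := sub_nonneg.2 (div_le_one_of_le₀ (by linarith) (by linarith))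
  have hL₁ : L ≤ 1 := sub_le_self _ (div_nonneg (by linarith) (by linarith))
  have hM₀ : 0 ≤ 4 / ((1 - β) * n) := div_nonneg zero_le_four (by nlinarith)
  -- `4 / ((1 - β) n)` is the fixed point of `v ↦ L v + 4 / n²`, and `L² ≤ L`
  have hfix : (1 - L) * (4 / ((1 - β) * n)) = 4 / (n : ℝ) ^ 2 := by
    rw [hL]
    field_simp [show (1 - β) ≠ 0 by linarith]
    ring
  refine le_of_succ_le_mul_add (v := fun t => magVar β n t k) (sq_nonneg L)
    (by rw [magVar_zero_time]; exact hM₀) ?_ (fun t => magVar_succ_le hn hβ₀ t k) t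
  nlinarith [mul_le_mul_of_nonneg_right (sq_le hL₀ hL₁) hM₀]

theorem magVar_one_le (hn : 0 < n) (t : ℕ) (k : Fin (n + 1)) :
    magVar 1 n t k ≤ 4 * t / (n : ℝ) ^ 2 := by
  have h := le_add_mul_of_succ_le_add (v := fun t => magVar 1 n t k)
    (fun t => by simpa using magVar_succ_le hn zero_le_one t k) t
  rw [magVar_zero_time] at h
  linarith [mul_div_right_comm (4 : ℝ) t ((n : ℝ) ^ 2)]

/-- Variance of the magnetization: there is a constant `C > 0` depending only
on `β` such that for all `n`, all times `t` and all starting states, if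
`β < 1` then `Var(S_t) ≤ C/n`, and if `β = 1` then `Var(S_t) ≤ C t / n²`. -/
theorem mag_variance (β : ℝ) (hβ : 0 ≤ β) :
    ∃ C > (0 : ℝ), ∀ (n t : ℕ) (k : Fin (n + 1)),
      (β < 1 → magVar β n t k ≤ C / n) ∧
      (β = 1 → magVar β n t k ≤ C * t / (n : ℝ) ^ 2) := by
  refine ⟨max 4 (4 / (1 - β)), lt_max_of_lt_left four_pos, fun n t k => ?_⟩
  rcases n.eq_zero_or_pos with rfl | hn
  · simp [magVar_zero_sites]
  refine ⟨fun hβ₁ => ?_, fun hβ₁ => ?_⟩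
  · calc magVar β n t k ≤ 4 / ((1 - β) * n) := magVar_le_of_lt_one hn hβ hβ₁ t k
      _ = 4 / (1 - β) / n := by rw [div_div]
      _ ≤ _ := by gcongr; exact le_max_right _ _
  · subst hβ₁
    calc magVar 1 n t k ≤ 4 * t / (n : ℝ) ^ 2 := magVar_one_le hn t k
      _ ≤ _ := by gcongr; exact le_max_left _ _

end

end CW
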